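/- arXiv:2401.11580 — 2 statements merged into one kernel-verified Lean document; each statement's English description precedes it below -/
import Mathlib

section
/- Let K_{L,R} be a complete bipartite graph on n = |L| + |R| vertices. For all integers 0 ≤ i ≤ |L| and 0 ≤ j ≤ |R| with (i,j) ≠ (0,0) and (i,j) ≠ (|L|,|R|), the normalized version age satisfies u(i,j) = (1 + ((|L|−i)·j/|R|)·u(i+1,j) + ((|R|−j)·i/|L|)·u(i,j+1)) / ((i+j)/n + (|L|−i)·j/|R| + (|R|−j)·i/|L|), where a term whose coefficient is 0 (i.e. when i = |L| or j = |R|) is omitted. -/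
open Finset
open scoped Classical

/-- Transmission rate from node `i` into the set `S`: `λ·|N(i) ∩ S|/deg(i)`,
interpreted as `0` when `deg(i) = 0`. -/
noncomputable def rate {n : ℕ} (lam : ℝ) (G : SimpleGraph (Fin n))
    (S : Finset (Fin n)) (i : Fin n) : ℝ :=
  if G.degree i = 0 then 0
  else lam * ((G.neighborFinset i ∩ S).card : ℝ) / (G.degree i : ℝ)

/-- The version age `v_G(S)`, defined by downward recursion on `n - |S|`. -/
noncomputable def vAge (lam_e lam : ℝ) {n : ℕ} (G : SimpleGraph (Fin n))
    (S : Finset (Fin n)) : ℝ :=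
  (lam_e + ∑ i ∈ Sᶜ.attach, rate lam G S i.1 * vAge lam_e lam G (insert i.1 S)) /
    (lam * (S.card : ℝ) / (n : ℝ) + ∑ i ∈ Sᶜ, rate lam G S i)
termination_by Sᶜ.card
decreasing_by
  have hi := i.2
  rw [Finset.compl_insert]
  exact Finset.card_erase_lt_of_mem hi

/-- The complete bipartite graph on `Fin n` whose left part consists of the
first `L` vertices. -/
def biGraph (n L : ℕ) : SimpleGraph (Fin n) where
  Adj i j := (i.val < L) ≠ (j.val < L)
  symm := ⟨fun _ _ h => Ne.symm h⟩
  loopless := ⟨fun _ h => h rfl⟩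

/-- Canonical subset of `K_{L,R}` with `i` left vertices and `j` right vertices. -/
def canonSet (n L i j : ℕ) : Finset (Fin n) :=
  ({v | v.val < i} : Finset (Fin n)) ∪ ({v | L ≤ v.val ∧ v.val < L + j} : Finset (Fin n))

/-- `u(i,j) = (λ/λ_e)·v(i,j)` for the complete bipartite graph `K_{L, n-L}`. -/
noncomputable def uIJ (lam_e lam : ℝ) (n L i j : ℕ) : ℝ :=
  (lam / lam_e) * vAge lam_e lam (biGraph n L) (canonSet n L i j)

/-- The number of edges of `G` with exactly one endpoint in `S`. -/
noncomputable def edgeBoundary {n : ℕ} (G : SimpleGraph (Fin n)) (S : Finset (Fin n)) : ℕ :=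
  ∑ i ∈ S, ((G.neighborFinset i).filter fun j => j ∉ S).card

/-- The probability, under the Erdős–Rényi measure `G(n,p)`, of a set `A` of graphs. -/
noncomputable def erProb (n : ℕ) (p : ℝ) (A : Finset (SimpleGraph (Fin n))) : ℝ :=
  ∑ G ∈ A, p ^ G.edgeFinset.card * (1 - p) ^ (n.choose 2 - G.edgeFinset.card)


/-! ### Auxiliary development -/

noncomputable def lc (n L : ℕ) (S : Finset (Fin n)) : ℕ :=
  (S.filter fun v => v.val < L).card
noncomputable def rc (n L : ℕ) (S : Finset (Fin n)) : ℕ :=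
  (S.filter fun v => ¬ v.val < L).card

lemma card_left (n L : ℕ) (h : L ≤ n) :
    (univ.filter fun v : Fin n => v.val < L).card = L := by
  rw [← Finset.card_image_of_injective _ Fin.val_injective]
  have : (univ.filter fun v : Fin n => v.val < L).image Fin.val = range L := by
    ext m
    simp only [Finset.mem_image, Finset.mem_filter, Finset.mem_univ, true_and, Finset.mem_range]
    constructor
    · rintro ⟨v, hv, rfl⟩; exact hv
    · intro hm; exact ⟨⟨m, lt_of_lt_of_le hm h⟩, hm, rfl⟩
  rw [this, card_range]

lemma card_right (n L : ℕ) (h : L ≤ n) :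
    (univ.filter fun v : Fin n => ¬ v.val < L).card = n - L := by
  have := Finset.card_filter_add_card_filter_not
    (s := (univ : Finset (Fin n))) (p := fun v : Fin n => v.val < L)
  rw [card_left n L h, Finset.card_univ, Fintype.card_fin] at this
  omega

lemma lc_add_rc (n L : ℕ) (S : Finset (Fin n)) : lc n L S + rc n L S = S.card :=
  Finset.card_filter_add_card_filter_not _

lemma lc_compl (n L : ℕ) (h : L ≤ n) (S : Finset (Fin n)) :
    (Sᶜ.filter fun v => v.val < L).card = L - lc n L S := by
  have hd : Disjoint (S.filter fun v : Fin n => v.val < L) (Sᶜ.filter fun v => v.val < L) :=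
    Finset.disjoint_filter_filter (disjoint_compl_right)
  have hu : (S.filter fun v : Fin n => v.val < L) ∪ (Sᶜ.filter fun v => v.val < L)
      = univ.filter fun v : Fin n => v.val < L := by
    rw [← Finset.filter_union, Finset.union_compl]
  have := Finset.card_union_of_disjoint hd
  rw [hu, card_left n L h] at this
  have h2 := Finset.card_filter_le S (fun v : Fin n => v.val < L)
  simp only [lc]
  omega

lemma rc_compl (n L : ℕ) (h : L ≤ n) (S : Finset (Fin n)) :
    (Sᶜ.filter fun v => ¬ v.val < L).card = (n - L) - rc n L S := by
  have hd : Disjoint (S.filter fun v : Fin n => ¬ v.val < L) (Sᶜ.filter fun v => ¬ v.val < L) :=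
    Finset.disjoint_filter_filter (disjoint_compl_right)
  have hu : (S.filter fun v : Fin n => ¬ v.val < L) ∪ (Sᶜ.filter fun v => ¬ v.val < L)
      = univ.filter fun v : Fin n => ¬ v.val < L := by
    rw [← Finset.filter_union, Finset.union_compl]
  have := Finset.card_union_of_disjoint hd
  rw [hu, card_right n L h] at this
  have h2 := Finset.card_filter_le S (fun v : Fin n => ¬ v.val < L)
  simp only [rc]
  omega

lemma neighborFinset_left (n L : ℕ) (v : Fin n) (hv : v.val < L) :
    (biGraph n L).neighborFinset v = univ.filter fun w : Fin n => ¬ w.val < L := by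
  ext w
  simp only [SimpleGraph.mem_neighborFinset, Finset.mem_filter, Finset.mem_univ, true_and]
  show ((v.val < L) ≠ (w.val < L)) ↔ _
  simp [hv]

lemma neighborFinset_right (n L : ℕ) (v : Fin n) (hv : ¬ v.val < L) :
    (biGraph n L).neighborFinset v = univ.filter fun w : Fin n => w.val < L := by
  ext w
  simp only [SimpleGraph.mem_neighborFinset, Finset.mem_filter, Finset.mem_univ, true_and]
  show ((v.val < L) ≠ (w.val < L)) ↔ _
  simp [hv]

lemma degree_left (n L : ℕ) (h : L ≤ n) (v : Fin n) (hv : v.val < L) :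
    (biGraph n L).degree v = n - L := by
  rw [← SimpleGraph.card_neighborFinset_eq_degree, neighborFinset_left n L v hv,
    card_right n L h]

lemma degree_right (n L : ℕ) (h : L ≤ n) (v : Fin n) (hv : ¬ v.val < L) :
    (biGraph n L).degree v = L := by
  rw [← SimpleGraph.card_neighborFinset_eq_degree, neighborFinset_right n L v hv,
    card_left n L h]

lemma rate_left (lam : ℝ) (n L : ℕ) (hLn : L < n) (S : Finset (Fin n))
    (v : Fin n) (hv : v.val < L) :
    rate lam (biGraph n L) S v = lam * (rc n L S : ℝ) / ((n - L : ℕ) : ℝ) := by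
  have hdeg := degree_left n L hLn.le v hv
  have hne : n - L ≠ 0 := by omega
  have hcard : ((biGraph n L).neighborFinset v ∩ S).card = rc n L S := by
    rw [neighborFinset_left n L v hv, rc]
    congr 1
    ext w
    simp [and_comm]
  rw [rate, if_neg (by rw [hdeg]; exact hne), hdeg, hcard]

lemma rate_right (lam : ℝ) (n L : ℕ) (hL : 0 < L) (hLn : L ≤ n) (S : Finset (Fin n))
    (v : Fin n) (hv : ¬ v.val < L) :
    rate lam (biGraph n L) S v = lam * (lc n L S : ℝ) / (L : ℝ) := by
  have hdeg := degree_right n L hLn v hv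
  have hcard : ((biGraph n L).neighborFinset v ∩ S).card = lc n L S := by
    rw [neighborFinset_right n L v hv, lc]
    congr 1
    ext w
    simp [and_comm]
  rw [rate, if_neg (by rw [hdeg]; omega), hdeg, hcard]

lemma lc_insert_left (n L : ℕ) (S : Finset (Fin n)) (v : Fin n) (hv : v.val < L)
    (hvS : v ∉ S) : lc n L (insert v S) = lc n L S + 1 := by
  rw [lc, Finset.filter_insert, if_pos hv, Finset.card_insert_of_notMem (by simp [hvS]), lc]

lemma rc_insert_left (n L : ℕ) (S : Finset (Fin n)) (v : Fin n) (hv : v.val < L) :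
    rc n L (insert v S) = rc n L S := by
  rw [rc, Finset.filter_insert, if_neg (by simp [hv]), rc]

lemma rc_insert_right (n L : ℕ) (S : Finset (Fin n)) (v : Fin n) (hv : ¬ v.val < L)
    (hvS : v ∉ S) : rc n L (insert v S) = rc n L S + 1 := by
  rw [rc, Finset.filter_insert, if_pos hv, Finset.card_insert_of_notMem (by simp [hvS]), rc]

lemma lc_insert_right (n L : ℕ) (S : Finset (Fin n)) (v : Fin n) (hv : ¬ v.val < L) :
    lc n L (insert v S) = lc n L S := by
  rw [lc, Finset.filter_insert, if_neg (by simp [hv]), lc]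

noncomputable def wfun (lam_e lam : ℝ) (n L : ℕ) : ℕ → ℕ → ℝ
  | i, j =>
    (lam_e
      + (if _h : i < L then
          ((L - i : ℕ) : ℝ) * (lam * (j : ℝ) / ((n - L : ℕ) : ℝ)) * wfun lam_e lam n L (i + 1) j
         else 0)
      + (if _h : j < n - L then
          ((n - L - j : ℕ) : ℝ) * (lam * (i : ℝ) / (L : ℝ)) * wfun lam_e lam n L i (j + 1)
         else 0))
    / (lam * ((i : ℝ) + (j : ℝ)) / (n : ℝ)
        + ((L - i : ℕ) : ℝ) * (lam * (j : ℝ) / ((n - L : ℕ) : ℝ))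
        + ((n - L - j : ℕ) : ℝ) * (lam * (i : ℝ) / (L : ℝ)))
  termination_by i j => (L - i) + (n - L - j)
  decreasing_by
    · omega
    · omega

lemma vAge_eq_wfun (lam_e lam : ℝ) (n L : ℕ) (hL : 0 < L) (hLn : L < n)
    (S : Finset (Fin n)) :
    vAge lam_e lam (biGraph n L) S = wfun lam_e lam n L (lc n L S) (rc n L S) := by
  suffices H : ∀ k (S : Finset (Fin n)), Sᶜ.card = k →
      vAge lam_e lam (biGraph n L) S = wfun lam_e lam n L (lc n L S) (rc n L S) from
    H _ S rfl
  intro k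
  induction k using Nat.strong_induction_on with
  | _ k IH =>
    intro S hS
    rw [vAge, wfun]
    rw [Finset.sum_attach Sᶜ (fun v => rate lam (biGraph n L) S v *
      vAge lam_e lam (biGraph n L) (insert v S))]
    rw [← Finset.sum_filter_add_sum_filter_not Sᶜ (fun v => v.val < L)
      (fun v => rate lam (biGraph n L) S v * vAge lam_e lam (biGraph n L) (insert v S))]
    rw [← Finset.sum_filter_add_sum_filter_not Sᶜ (fun v => v.val < L)
      (fun v => rate lam (biGraph n L) S v)]
    have hsum1 : ∑ v ∈ Sᶜ.filter (fun v => v.val < L),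
        rate lam (biGraph n L) S v * vAge lam_e lam (biGraph n L) (insert v S)
        = ((L - lc n L S : ℕ) : ℝ) * ((lam * (rc n L S : ℝ) / ((n - L : ℕ) : ℝ)) *
            wfun lam_e lam n L (lc n L S + 1) (rc n L S)) := by
      rw [Finset.sum_congr rfl (fun v hv => ?_), Finset.sum_const, nsmul_eq_mul,
        lc_compl n L hLn.le S]
      simp only [Finset.mem_filter, Finset.mem_compl] at hv
      rw [rate_left lam n L hLn S v hv.2]
      have hins : vAge lam_e lam (biGraph n L) (insert v S)
          = wfun lam_e lam n L (lc n L S + 1) (rc n L S) := by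
        have hcard : (insert v S)ᶜ.card < k := by
          rw [Finset.compl_insert, ← hS]
          exact Finset.card_erase_lt_of_mem (Finset.mem_compl.mpr hv.1)
        rw [IH _ hcard (insert v S) rfl, lc_insert_left n L S v hv.2 hv.1,
          rc_insert_left n L S v hv.2]
      rw [hins]
    have hsum2 : ∑ v ∈ Sᶜ.filter (fun v => ¬ v.val < L),
        rate lam (biGraph n L) S v * vAge lam_e lam (biGraph n L) (insert v S)
        = ((n - L - rc n L S : ℕ) : ℝ) * ((lam * (lc n L S : ℝ) / (L : ℝ)) *
            wfun lam_e lam n L (lc n L S) (rc n L S + 1)) := by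
      rw [Finset.sum_congr rfl (fun v hv => ?_), Finset.sum_const, nsmul_eq_mul,
        rc_compl n L hLn.le S]
      simp only [Finset.mem_filter, Finset.mem_compl] at hv
      rw [rate_right lam n L hL hLn.le S v hv.2]
      have hins : vAge lam_e lam (biGraph n L) (insert v S)
          = wfun lam_e lam n L (lc n L S) (rc n L S + 1) := by
        have hcard : (insert v S)ᶜ.card < k := by
          rw [Finset.compl_insert, ← hS]
          exact Finset.card_erase_lt_of_mem (Finset.mem_compl.mpr hv.1)
        rw [IH _ hcard (insert v S) rfl, lc_insert_right n L S v hv.2,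
          rc_insert_right n L S v hv.2 hv.1]
      rw [hins]
    have hden1 : ∑ v ∈ Sᶜ.filter (fun v => v.val < L), rate lam (biGraph n L) S v
        = ((L - lc n L S : ℕ) : ℝ) * (lam * (rc n L S : ℝ) / ((n - L : ℕ) : ℝ)) := by
      rw [Finset.sum_congr rfl (fun v hv => ?_), Finset.sum_const, nsmul_eq_mul,
        lc_compl n L hLn.le S]
      simp only [Finset.mem_filter, Finset.mem_compl] at hv
      exact rate_left lam n L hLn S v hv.2
    have hden2 : ∑ v ∈ Sᶜ.filter (fun v => ¬ v.val < L), rate lam (biGraph n L) S v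
        = ((n - L - rc n L S : ℕ) : ℝ) * (lam * (lc n L S : ℝ) / (L : ℝ)) := by
      rw [Finset.sum_congr rfl (fun v hv => ?_), Finset.sum_const, nsmul_eq_mul,
        rc_compl n L hLn.le S]
      simp only [Finset.mem_filter, Finset.mem_compl] at hv
      exact rate_right lam n L hL hLn.le S v hv.2
    rw [hsum1, hsum2, hden1, hden2]
    have hcardS : (S.card : ℝ) = (lc n L S : ℝ) + (rc n L S : ℝ) := by
      have := lc_add_rc n L S
      push_cast [← this]
      ring
    rw [hcardS]
    by_cases h1 : lc n L S < L
    · by_cases h2 : rc n L S < n - L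
      · rw [dif_pos h1, dif_pos h2]; ring
      · rw [dif_pos h1, dif_neg h2,
          show n - L - rc n L S = 0 from Nat.sub_eq_zero_of_le (le_of_not_gt h2)]
        push_cast
        ring
    · by_cases h2 : rc n L S < n - L
      · rw [dif_neg h1, dif_pos h2,
          show L - lc n L S = 0 from Nat.sub_eq_zero_of_le (le_of_not_gt h1)]
        push_cast
        ring
      · rw [dif_neg h1, dif_neg h2,
          show L - lc n L S = 0 from Nat.sub_eq_zero_of_le (le_of_not_gt h1),
          show n - L - rc n L S = 0 from Nat.sub_eq_zero_of_le (le_of_not_gt h2)]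
        push_cast
        ring

lemma card_mid (n a b : ℕ) (h : b ≤ n) :
    (univ.filter fun v : Fin n => a ≤ v.val ∧ v.val < b).card = b - a := by
  rw [← Finset.card_image_of_injective _ Fin.val_injective]
  have himg : (univ.filter fun v : Fin n => a ≤ v.val ∧ v.val < b).image Fin.val
      = Ico a b := by
    ext m
    simp only [Finset.mem_image, Finset.mem_filter, Finset.mem_univ, true_and, Finset.mem_Ico]
    constructor
    · rintro ⟨v, hv, rfl⟩; exact hv
    · intro hm; exact ⟨⟨m, lt_of_lt_of_le hm.2 h⟩, hm, rfl⟩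
  rw [himg, Nat.card_Ico]

lemma lc_canon (n L i j : ℕ) (hi : i ≤ L) (hij : L + j ≤ n) :
    lc n L (canonSet n L i j) = i := by
  have hfe : (canonSet n L i j).filter (fun v => v.val < L)
      = univ.filter fun v : Fin n => v.val < i := by
    ext v
    simp [canonSet]
    omega
  rw [lc, hfe, card_left n i (by omega)]

lemma rc_canon (n L i j : ℕ) (hi : i ≤ L) (hij : L + j ≤ n) :
    rc n L (canonSet n L i j) = j := by
  have hfe : (canonSet n L i j).filter (fun v => ¬ v.val < L)
      = univ.filter fun v : Fin n => L ≤ v.val ∧ v.val < L + j := by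
    ext v
    simp [canonSet]
    omega
  rw [rc, hfe, card_mid n L (L + j) hij]
  omega

lemma alg (lam_e lam d0 c1 c2 W1 W2 : ℝ) (hlame : lam_e ≠ 0) (hlam : lam ≠ 0)
    (hd : d0 + c1 + c2 ≠ 0) :
    (lam/lam_e) * ((lam_e + c1*(lam*W1) + c2*(lam*W2)) / (lam*(d0+c1+c2)))
    = (1 + c1*((lam/lam_e)*W1) + c2*((lam/lam_e)*W2)) / (d0+c1+c2) := by
  generalize hD : d0 + c1 + c2 = D at hd ⊢
  field_simp


/-- The recursion for the normalized version age `u(i,j)` in the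
complete bipartite graph `K_{L,R}` with `R = n - L` (terms with a zero coefficient
vanish since they are multiplied by `0`). -/
theorem stmt_5 (lam_e lam : ℝ) (hlam_e : 0 < lam_e) (hlam : 0 < lam)
    (n L : ℕ) (hL : 0 < L) (hLn : L < n)
    (i j : ℕ) (hi : i ≤ L) (hj : j ≤ n - L)
    (h0 : ¬(i = 0 ∧ j = 0)) (hfull : ¬(i = L ∧ j = n - L)) :
    uIJ lam_e lam n L i j =
      (1 + ((L - i : ℕ) : ℝ) * (j : ℝ) / ((n - L : ℕ) : ℝ) * uIJ lam_e lam n L (i + 1) j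
         + ((n - L - j : ℕ) : ℝ) * (i : ℝ) / (L : ℝ) * uIJ lam_e lam n L i (j + 1)) /
      (((i : ℝ) + (j : ℝ)) / (n : ℝ)
         + ((L - i : ℕ) : ℝ) * (j : ℝ) / ((n - L : ℕ) : ℝ)
         + ((n - L - j : ℕ) : ℝ) * (i : ℝ) / (L : ℝ)) := by
  have hn0 : (n : ℝ) ≠ 0 := Nat.cast_ne_zero.mpr (by omega)
  have hL0 : (L : ℝ) ≠ 0 := Nat.cast_ne_zero.mpr (by omega)
  have hR0 : ((n - L : ℕ) : ℝ) ≠ 0 := Nat.cast_ne_zero.mpr (by omega)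
  have hu : ∀ i' j', i' ≤ L → L + j' ≤ n →
      uIJ lam_e lam n L i' j' = (lam / lam_e) * wfun lam_e lam n L i' j' := by
    intro i' j' h1 h2
    rw [uIJ, vAge_eq_wfun lam_e lam n L hL hLn, lc_canon n L i' j' h1 h2,
      rc_canon n L i' j' h1 h2]
  have hd : ((i : ℝ) + (j : ℝ)) / (n : ℝ)
      + ((L - i : ℕ) : ℝ) * (j : ℝ) / ((n - L : ℕ) : ℝ)
      + ((n - L - j : ℕ) : ℝ) * (i : ℝ) / (L : ℝ) ≠ 0 := by
    have h1 : 0 < ((i : ℝ) + (j : ℝ)) / (n : ℝ) := by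
      apply div_pos
      · have : 0 < i + j := by omega
        push_cast
        exact_mod_cast Nat.cast_pos.mpr this
      · exact_mod_cast Nat.pos_of_ne_zero (by omega)
    have h2 : 0 ≤ ((L - i : ℕ) : ℝ) * (j : ℝ) / ((n - L : ℕ) : ℝ) := by positivity
    have h3 : 0 ≤ ((n - L - j : ℕ) : ℝ) * (i : ℝ) / (L : ℝ) := by positivity
    linarith
  rw [hu i j hi (by omega), wfun]
  by_cases h1 : i < L
  · rw [dif_pos h1]
    rw [hu (i + 1) j (by omega) (by omega)]
    by_cases h2 : j < n - L
    · rw [dif_pos h2, hu i (j + 1) hi (by omega)]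
      have := alg lam_e lam (((i : ℝ) + (j : ℝ)) / (n : ℝ))
        (((L - i : ℕ) : ℝ) * (j : ℝ) / ((n - L : ℕ) : ℝ))
        (((n - L - j : ℕ) : ℝ) * (i : ℝ) / (L : ℝ))
        (wfun lam_e lam n L (i + 1) j) (wfun lam_e lam n L i (j + 1))
        hlam_e.ne' hlam.ne' hd
      convert this using 2 <;> ring
    · rw [dif_neg h2, show n - L - j = 0 by omega]
      have := alg lam_e lam (((i : ℝ) + (j : ℝ)) / (n : ℝ))
        (((L - i : ℕ) : ℝ) * (j : ℝ) / ((n - L : ℕ) : ℝ))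
        (((0 : ℕ) : ℝ) * (i : ℝ) / (L : ℝ))
        (wfun lam_e lam n L (i + 1) j) 0
        hlam_e.ne' hlam.ne' (by rw [show n - L - j = 0 by omega] at hd; exact hd)
      convert this using 2 <;> push_cast <;> ring
  · have hiL : i = L := by omega
    have h2 : j < n - L := by omega
    rw [dif_neg h1, dif_pos h2, hu i (j + 1) hi (by omega), show L - i = 0 by omega]
    have := alg lam_e lam (((i : ℝ) + (j : ℝ)) / (n : ℝ))
      (((0 : ℕ) : ℝ) * (j : ℝ) / ((n - L : ℕ) : ℝ))
      (((n - L - j : ℕ) : ℝ) * (i : ℝ) / (L : ℝ))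
      0 (wfun lam_e lam n L i (j + 1))
      hlam_e.ne' hlam.ne' (by rw [show L - i = 0 by omega] at hd; exact hd)
    convert this using 2 <;> push_cast <;> ring
end

section
/- Let K_{L,R} be a complete bipartite graph with |L| = L and |R| = R. For every integer k with 1 ≤ k ≤ L − 1, the normalized version age satisfies u(k,1) ≤ R/(L − k) + u(k+1,1). -/
open Finset
open scoped Classical

section Generic
variable {n : ℕ} {lam_e lam : ℝ} {G : SimpleGraph (Fin n)}

lemma rate_nonneg (hlam : 0 ≤ lam) (S : Finset (Fin n)) (i : Fin n) :
    0 ≤ rate lam G S i := by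
  unfold rate
  split
  · exact le_refl 0
  · positivity

lemma rate_mono (hlam : 0 ≤ lam) {S T : Finset (Fin n)} (hST : S ⊆ T) (i : Fin n) :
    rate lam G S i ≤ rate lam G T i := by
  unfold rate
  split
  · exact le_refl 0
  · rename_i h
    have hd : (0:ℝ) < G.degree i := Nat.cast_pos.mpr (Nat.pos_of_ne_zero h)
    gcongr

lemma vAge_def (S : Finset (Fin n)) :
    vAge lam_e lam G S =
      (lam_e + ∑ i ∈ Sᶜ, rate lam G S i * vAge lam_e lam G (insert i S)) /
        (lam * (S.card : ℝ) / (n : ℝ) + ∑ i ∈ Sᶜ, rate lam G S i) := by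
  rw [vAge, Finset.sum_attach _ (fun i => rate lam G S i * vAge lam_e lam G (insert i S))]


lemma den_pos (hlam : 0 < lam) {S : Finset (Fin n)} (hS : S.Nonempty) :
    0 < lam * (S.card : ℝ) / (n : ℝ) + ∑ i ∈ Sᶜ, rate lam G S i := by
  obtain ⟨x, hx⟩ := hS
  have hn : 0 < n := x.pos
  have h1 : 0 < lam * (S.card : ℝ) / (n : ℝ) := by
    apply div_pos (mul_pos hlam ?_) (Nat.cast_pos.mpr hn)
    exact_mod_cast Finset.card_pos.mpr ⟨x, hx⟩
  have h2 : 0 ≤ ∑ i ∈ Sᶜ, rate lam G S i :=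
    Finset.sum_nonneg fun i _ => rate_nonneg hlam.le S i
  linarith

lemma card_compl_insert_lt {S : Finset (Fin n)} {i : Fin n} (hi : i ∈ Sᶜ) :
    (insert i S)ᶜ.card < Sᶜ.card := by
  rw [Finset.compl_insert]
  exact Finset.card_erase_lt_of_mem hi

lemma vAge_nonneg (hle : 0 < lam_e) (hlam : 0 < lam) (S : Finset (Fin n)) (hS : S.Nonempty) :
    0 ≤ vAge lam_e lam G S := by
  generalize hm : Sᶜ.card = m
  induction m using Nat.strong_induction_on generalizing S with
  | _ m IH =>
    subst hm
    rw [vAge_def]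
    apply div_nonneg _ (den_pos hlam hS).le
    apply add_nonneg hle.le
    apply Finset.sum_nonneg
    intro i hi
    exact mul_nonneg (rate_nonneg hlam.le S i)
      (IH _ (card_compl_insert_lt hi) _ (Finset.insert_nonempty i S) rfl)

lemma vAge_insert_le (hle : 0 < lam_e) (hlam : 0 < lam) (S : Finset (Fin n))
    (hS : S.Nonempty) (v : Fin n) (hv : v ∉ S) :
    vAge lam_e lam G (insert v S) ≤ vAge lam_e lam G S := by
  generalize hm : Sᶜ.card = m
  induction m using Nat.strong_induction_on generalizing S v with
  | _ m IH =>
    subst hm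
    set S' : Finset (Fin n) := insert v S with hS'
    have hvS : v ∈ Sᶜ := Finset.mem_compl.mpr hv
    have hcomplS' : S'ᶜ = Sᶜ.erase v := Finset.compl_insert
    have hcardS' : S'ᶜ.card < Sᶜ.card := card_compl_insert_lt hvS
    have hS'ne : S'.Nonempty := Finset.insert_nonempty v S
    -- abbreviations
    set W : ℝ := lam * (S.card : ℝ) / (n : ℝ) with hW
    set W' : ℝ := lam * (S'.card : ℝ) / (n : ℝ) with hW'
    have hWle : W ≤ W' := by
      have hn : (0:ℝ) < n := by
        obtain ⟨x, _⟩ := hS; exact_mod_cast x.pos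
      rw [hW, hW']
      gcongr
      exact Finset.subset_insert v S
    -- value of V(S')
    have hVS'0 : 0 ≤ vAge lam_e lam G S' := vAge_nonneg hle hlam S' hS'ne
    -- split sums over Sᶜ
    have hsplit : ∀ f : Fin n → ℝ, ∑ i ∈ Sᶜ, f i = f v + ∑ i ∈ S'ᶜ, f i := by
      intro f
      rw [hcomplS', ← Finset.add_sum_erase _ f hvS]
    -- S' recursion as equality
    have hrecS' : vAge lam_e lam G S' * (W' + ∑ i ∈ S'ᶜ, rate lam G S' i)
        = lam_e + ∑ i ∈ S'ᶜ, rate lam G S' i * vAge lam_e lam G (insert i S') := by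
      rw [vAge_def S', div_mul_cancel₀]
      exact (den_pos hlam hS'ne).ne'
    -- IH instances
    have hmono1 : ∀ i ∈ S'ᶜ, vAge lam_e lam G (insert i S') ≤ vAge lam_e lam G S' := by
      intro i hi
      exact IH _ hcardS' S' hS'ne i (Finset.mem_compl.mp hi) rfl
    have hmono2 : ∀ i ∈ S'ᶜ, vAge lam_e lam G (insert v (insert i S))
        ≤ vAge lam_e lam G (insert i S) := by
      intro i hi
      have hiv : i ≠ v := by
        intro h; rw [h] at hi; exact (Finset.mem_compl.mp hi) (Finset.mem_insert_self v S)
      have hivS : i ∉ S := fun h => (Finset.mem_compl.mp hi) (Finset.mem_insert_of_mem h)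
      have : (insert i S)ᶜ.card < Sᶜ.card := card_compl_insert_lt (Finset.mem_compl.mpr hivS)
      exact IH _ this (insert i S) (Finset.insert_nonempty i S) v
        (by simp [Finset.mem_insert, hv]; exact fun h => hiv h.symm) rfl
    -- main inequality
    rw [vAge_def S]
    rw [le_div_iff₀ (den_pos hlam hS)]
    rw [hsplit (fun i => rate lam G S i * vAge lam_e lam G (insert i S)),
        hsplit (fun i => rate lam G S i)]
    -- step 1: replace insert i S values by insert i S' values
    have step1 : ∑ i ∈ S'ᶜ, rate lam G S i * vAge lam_e lam G (insert i S')
        ≤ ∑ i ∈ S'ᶜ, rate lam G S i * vAge lam_e lam G (insert i S) := by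
      apply Finset.sum_le_sum
      intro i hi
      apply mul_le_mul_of_nonneg_left _ (rate_nonneg hlam.le S i)
      rw [hS', Finset.insert_comm]
      exact hmono2 i hi
    -- step 2
    have step2 : vAge lam_e lam G S' * (W + (rate lam G S v + ∑ i ∈ S'ᶜ, rate lam G S i))
        ≤ lam_e + (rate lam G S v * vAge lam_e lam G S' +
            ∑ i ∈ S'ᶜ, rate lam G S i * vAge lam_e lam G (insert i S')) := by
      have key : ∑ i ∈ S'ᶜ, rate lam G S i * vAge lam_e lam G S'
            - ∑ i ∈ S'ᶜ, rate lam G S i * vAge lam_e lam G (insert i S')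
          ≤ ∑ i ∈ S'ᶜ, rate lam G S' i * vAge lam_e lam G S'
            - ∑ i ∈ S'ᶜ, rate lam G S' i * vAge lam_e lam G (insert i S') := by
        rw [← Finset.sum_sub_distrib, ← Finset.sum_sub_distrib]
        apply Finset.sum_le_sum
        intro i hi
        rw [← mul_sub, ← mul_sub]
        apply mul_le_mul_of_nonneg_right (rate_mono hlam.le (Finset.subset_insert v S) i)
        linarith [hmono1 i hi]
      have hWW : vAge lam_e lam G S' * W ≤ vAge lam_e lam G S' * W' :=
        mul_le_mul_of_nonneg_left hWle hVS'0
      have hsum' : ∑ i ∈ S'ᶜ, rate lam G S i * vAge lam_e lam G S'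
          = (∑ i ∈ S'ᶜ, rate lam G S i) * vAge lam_e lam G S' := by
        rw [Finset.sum_mul]
      have hsum'' : ∑ i ∈ S'ᶜ, rate lam G S' i * vAge lam_e lam G S'
          = (∑ i ∈ S'ᶜ, rate lam G S' i) * vAge lam_e lam G S' := by
        rw [Finset.sum_mul]
      nlinarith [hrecS']
    calc vAge lam_e lam G S' * (W + (rate lam G S v + ∑ i ∈ S'ᶜ, rate lam G S i))
        ≤ lam_e + (rate lam G S v * vAge lam_e lam G S' +
            ∑ i ∈ S'ᶜ, rate lam G S i * vAge lam_e lam G (insert i S')) := step2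
      _ ≤ lam_e + (rate lam G S v * vAge lam_e lam G (insert v S) +
            ∑ i ∈ S'ᶜ, rate lam G S i * vAge lam_e lam G (insert i S)) := by
          rw [← hS']; linarith [step1]


lemma neighborFinset_image (σ : Equiv.Perm (Fin n))
    (hσ : ∀ a b, G.Adj (σ a) (σ b) ↔ G.Adj a b) (i : Fin n) :
    G.neighborFinset (σ i) = (G.neighborFinset i).image σ := by
  ext x
  simp only [SimpleGraph.mem_neighborFinset, Finset.mem_image]
  constructor
  · intro h
    refine ⟨σ.symm x, (hσ i (σ.symm x)).mp ?_, by simp⟩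
    simpa using h
  · rintro ⟨a, ha, rfl⟩
    exact (hσ i a).mpr ha

lemma degree_image (σ : Equiv.Perm (Fin n))
    (hσ : ∀ a b, G.Adj (σ a) (σ b) ↔ G.Adj a b) (i : Fin n) :
    G.degree (σ i) = G.degree i := by
  rw [← SimpleGraph.card_neighborFinset_eq_degree, ← SimpleGraph.card_neighborFinset_eq_degree,
    neighborFinset_image σ hσ, Finset.card_image_of_injective _ σ.injective]

lemma rate_image (σ : Equiv.Perm (Fin n))
    (hσ : ∀ a b, G.Adj (σ a) (σ b) ↔ G.Adj a b) (S : Finset (Fin n)) (i : Fin n) :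
    rate lam G (S.image σ) (σ i) = rate lam G S i := by
  unfold rate
  rw [degree_image σ hσ, neighborFinset_image σ hσ, ← Finset.image_inter _ _ σ.injective,
    Finset.card_image_of_injective _ σ.injective]

lemma compl_image (σ : Equiv.Perm (Fin n)) (S : Finset (Fin n)) :
    (S.image σ)ᶜ = Sᶜ.image σ := by
  ext x
  simp only [Finset.mem_compl, Finset.mem_image]
  constructor
  · intro h
    exact ⟨σ.symm x, fun hc => h ⟨σ.symm x, hc, by simp⟩, by simp⟩
  · rintro ⟨a, ha, rfl⟩ ⟨b, hb, hba⟩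
    exact ha ((σ.injective hba) ▸ hb)

lemma vAge_image (σ : Equiv.Perm (Fin n))
    (hσ : ∀ a b, G.Adj (σ a) (σ b) ↔ G.Adj a b) (S : Finset (Fin n)) :
    vAge lam_e lam G (S.image σ) = vAge lam_e lam G S := by
  generalize hm : Sᶜ.card = m
  induction m using Nat.strong_induction_on generalizing S with
  | _ m IH =>
    subst hm
    rw [vAge_def, vAge_def S]
    have hc : (S.image σ).card = S.card := Finset.card_image_of_injective _ σ.injective
    rw [hc, compl_image]
    rw [Finset.sum_image (fun a _ b _ h => σ.injective h),
        Finset.sum_image (fun a _ b _ h => σ.injective h)]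
    congr 2
    · apply Finset.sum_congr rfl
      intro i hi
      rw [rate_image σ hσ, ← Finset.image_insert]
      rw [IH _ (card_compl_insert_lt hi) _ rfl]
    · apply Finset.sum_congr rfl
      intro i hi
      rw [rate_image σ hσ]

end Generic

/-- `u(i,j) = (λ/λ_e)·v(i,j)` for the complete bipartite graph `K_{L, n-L}`. -/


lemma card_filter_val {n : ℕ} (p : ℕ → Prop) [DecidablePred p] :
    ((univ : Finset (Fin n)).filter fun v => p v.val).card = ((range n).filter p).card := by
  rw [← Finset.card_image_of_injective _ Fin.val_injective]
  congr 1
  ext x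
  simp only [Finset.mem_image, Finset.mem_filter, Finset.mem_univ, true_and, Finset.mem_range]
  constructor
  · rintro ⟨a, ha, rfl⟩; exact ⟨a.isLt, ha⟩
  · rintro ⟨hx, hp⟩; exact ⟨⟨x, hx⟩, hp, rfl⟩

lemma biGraph_adj {n L : ℕ} (a b : Fin n) :
    (biGraph n L).Adj a b ↔ ¬(a.val < L ↔ b.val < L) := by
  show (a.val < L) ≠ (b.val < L) ↔ _
  rw [ne_eq, eq_iff_iff]

lemma biGraph_nbhd {n L : ℕ} (i : Fin n) :
    (biGraph n L).neighborFinset i = univ.filter fun v => ¬(i.val < L ↔ v.val < L) := by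
  ext x
  simp [SimpleGraph.mem_neighborFinset, biGraph_adj]

lemma biGraph_degree_left {L R : ℕ} (i : Fin (L + R)) (hi : i.val < L) :
    (biGraph (L + R) L).degree i = R := by
  rw [← SimpleGraph.card_neighborFinset_eq_degree, biGraph_nbhd]
  have : ((univ : Finset (Fin (L + R))).filter fun v => ¬(i.val < L ↔ v.val < L)) =
      univ.filter fun v => ¬ v.val < L := by
    apply Finset.filter_congr
    intro v _
    simp [hi]
  rw [this, card_filter_val (fun x => ¬ x < L)]
  have : ((range (L + R)).filter fun x => ¬ x < L) = Finset.Ico L (L + R) := by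
    ext x; simp; omega
  rw [this, Nat.card_Ico]
  omega

lemma biGraph_degree_right {L R : ℕ} (i : Fin (L + R)) (hi : ¬ i.val < L) :
    (biGraph (L + R) L).degree i = L := by
  rw [← SimpleGraph.card_neighborFinset_eq_degree, biGraph_nbhd]
  have : ((univ : Finset (Fin (L + R))).filter fun v => ¬(i.val < L ↔ v.val < L)) =
      univ.filter fun v => v.val < L := by
    apply Finset.filter_congr
    intro v _
    simp [hi]
  rw [this, card_filter_val (fun x => x < L)]
  have : ((range (L + R)).filter fun x => x < L) = Finset.range L := by
    ext x; simp; omega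
  rw [this, Finset.card_range]

section CanonFacts
variable {L R k : ℕ}

lemma mem_canon1 (v : Fin (L + R)) :
    v ∈ canonSet (L + R) L k 1 ↔ (v.val < k ∨ v.val = L) := by
  simp [canonSet]
  omega

lemma canon1_eq_filter : canonSet (L + R) L k 1 =
    univ.filter fun v => (v.val < k ∨ v.val = L) := by
  ext v
  simp [mem_canon1]

lemma card_canon1 (hR : 1 ≤ R) (hkL : k + 1 ≤ L) : (canonSet (L + R) L k 1).card = k + 1 := by
  rw [canon1_eq_filter, card_filter_val (fun x => x < k ∨ x = L)]
  have : ((range (L + R)).filter fun x => x < k ∨ x = L) = insert L (range k) := by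
    ext x; simp; omega
  rw [this, Finset.card_insert_of_notMem (by simp; omega), Finset.card_range]

lemma card_leftOut : ((canonSet (L + R) L k 1)ᶜ.filter fun v => v.val < L).card = L - k := by
  have h : ((canonSet (L + R) L k 1)ᶜ.filter fun v => v.val < L) =
      univ.filter fun v : Fin (L + R) => ¬((v:ℕ) < k ∨ (v:ℕ) = L) ∧ (v:ℕ) < L := by
    ext v
    simp [Finset.mem_filter, Finset.mem_compl, mem_canon1]
  rw [h, card_filter_val (fun x => ¬(x < k ∨ x = L) ∧ x < L)]
  have : ((range (L + R)).filter fun x => ¬(x < k ∨ x = L) ∧ x < L) = Finset.Ico k L := by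
    ext x; simp; omega
  rw [this, Nat.card_Ico]

lemma card_rightOut (hkL : k + 1 ≤ L) : ((canonSet (L + R) L k 1)ᶜ.filter fun v => ¬ v.val < L).card = R - 1 := by
  have h : ((canonSet (L + R) L k 1)ᶜ.filter fun v => ¬ v.val < L) =
      univ.filter fun v : Fin (L + R) => ¬((v:ℕ) < k ∨ (v:ℕ) = L) ∧ ¬ (v:ℕ) < L := by
    ext v
    simp [Finset.mem_filter, Finset.mem_compl, mem_canon1]
  rw [h, card_filter_val (fun x => ¬(x < k ∨ x = L) ∧ ¬ x < L)]
  have : ((range (L + R)).filter fun x => ¬(x < k ∨ x = L) ∧ ¬ x < L) =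
      Finset.Ico (L + 1) (L + R) := by
    ext x; simp; omega
  rw [this, Nat.card_Ico]
  omega

lemma inter_left (hR : 1 ≤ R) (hkL : k + 1 ≤ L) (v : Fin (L + R)) (hv : v.val < L) :
    ((biGraph (L + R) L).neighborFinset v ∩ canonSet (L + R) L k 1).card = 1 := by
  have h : (biGraph (L + R) L).neighborFinset v ∩ canonSet (L + R) L k 1 =
      {(⟨L, by omega⟩ : Fin (L + R))} := by
    ext x
    simp only [Finset.mem_inter, biGraph_nbhd, Finset.mem_filter, Finset.mem_univ, true_and,
      mem_canon1, Finset.mem_singleton, Fin.ext_iff, hv, true_iff]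
    omega
  rw [h, Finset.card_singleton]

lemma inter_right (hkL : k + 1 ≤ L) (v : Fin (L + R)) (hv : ¬ v.val < L) :
    ((biGraph (L + R) L).neighborFinset v ∩ canonSet (L + R) L k 1).card = k := by
  have h : (biGraph (L + R) L).neighborFinset v ∩ canonSet (L + R) L k 1 =
      univ.filter fun x : Fin (L + R) => (x : ℕ) < k := by
    ext x
    simp only [Finset.mem_inter, biGraph_nbhd, Finset.mem_filter, Finset.mem_univ, true_and,
      mem_canon1, hv, false_iff]
    omega
  rw [h, card_filter_val (fun x => x < k)]
  have : ((range (L + R)).filter fun x => x < k) = range k := by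
    ext x; simp; omega
  rw [this, Finset.card_range]

end CanonFacts

lemma biGraph_swap_auto {n L : ℕ} (a b : Fin n) (ha : a.val < L) (hb : b.val < L) :
    ∀ x y, (biGraph n L).Adj (Equiv.swap a b x) (Equiv.swap a b y) ↔ (biGraph n L).Adj x y := by
  have hp : ∀ x : Fin n, ((Equiv.swap a b x) : ℕ) < L ↔ (x : ℕ) < L := by
    intro x
    rcases eq_or_ne x a with rfl | hxa
    · rw [Equiv.swap_apply_left]
      exact ⟨fun _ => ha, fun _ => hb⟩
    rcases eq_or_ne x b with rfl | hxb
    · rw [Equiv.swap_apply_right]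
      exact ⟨fun _ => hb, fun _ => ha⟩
    · rw [Equiv.swap_apply_of_ne_of_ne hxa hxb]
  intro x y
  rw [biGraph_adj, biGraph_adj, hp, hp]

lemma insert_left_eq {L R k : ℕ} (hR : 1 ≤ R) (hkL : k + 1 ≤ L) (v : Fin (L + R))
    (hv1 : k ≤ v.val) (hv2 : v.val < L) :
    (insert v (canonSet (L + R) L k 1)).image
      (Equiv.swap v (⟨k, by omega⟩ : Fin (L + R))) = canonSet (L + R) L (k + 1) 1 := by
  set K : Fin (L + R) := ⟨k, by omega⟩ with hK
  rw [Finset.image_insert, Equiv.swap_apply_left]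
  have himg : (canonSet (L + R) L k 1).image (Equiv.swap v K) = canonSet (L + R) L k 1 := by
    rw [show (canonSet (L + R) L k 1).image (Equiv.swap v K)
        = (canonSet (L + R) L k 1).image id from Finset.image_congr ?_, Finset.image_id]
    intro x hx
    rw [Finset.mem_coe, mem_canon1] at hx
    apply Equiv.swap_apply_of_ne_of_ne
    · intro h
      rw [h] at hx
      omega
    · intro h
      rw [h] at hx
      have hKk : (K : ℕ) = k := rfl
      omega
  rw [himg]
  ext x
  rw [Finset.mem_insert, mem_canon1, mem_canon1, hK, Fin.ext_iff]
  show (x : ℕ) = k ∨ _ ↔ _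
  omega

/-- In `K_{L,R}`, for `1 ≤ k ≤ L - 1`,
`u(k,1) ≤ R/(L-k) + u(k+1,1)`. -/

theorem stmt_7 (lam_e lam : ℝ) (hlam_e : 0 < lam_e) (hlam : 0 < lam)
    (L R : ℕ) (hR : 0 < R) (k : ℕ) (hk1 : 1 ≤ k) (hk2 : k ≤ L - 1) :
    uIJ lam_e lam (L + R) L k 1 ≤
      (R : ℝ) / ((L : ℝ) - (k : ℝ)) + uIJ lam_e lam (L + R) L (k + 1) 1 := by
  have hkL : k + 1 ≤ L := by omega
  have hR1 : 1 ≤ R := hR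
  set G := biGraph (L + R) L with hG
  set S := canonSet (L + R) L k 1 with hSdef
  set S' := canonSet (L + R) L (k + 1) 1 with hS'def
  set V : ℝ := vAge lam_e lam G S with hV
  set V' : ℝ := vAge lam_e lam G S' with hV'
  have hSne : S.Nonempty := ⟨⟨0, by omega⟩, by rw [hSdef, mem_canon1]; left; exact hk1⟩
  have hS'ne : S'.Nonempty := ⟨⟨0, by omega⟩, by rw [hS'def, mem_canon1]; left; exact Nat.lt_succ_of_lt hk1⟩
  have hV'0 : (0:ℝ) ≤ V' := vAge_nonneg hlam_e hlam _ hS'ne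
  have hV0 : (0:ℝ) ≤ V := vAge_nonneg hlam_e hlam _ hSne
  -- left-out vertices
  have hmemL : ∀ v : Fin (L + R), v ∈ Sᶜ.filter (fun v : Fin (L + R) => (v:ℕ) < L) →
      k ≤ (v:ℕ) ∧ (v:ℕ) < L ∧ v ∉ S := by
    intro v hv
    rw [Finset.mem_filter, Finset.mem_compl] at hv
    obtain ⟨hvc, hvL⟩ := hv
    have := hvc
    rw [hSdef, mem_canon1] at this
    exact ⟨by omega, hvL, hvc⟩
  have hleft : ∀ v ∈ Sᶜ.filter (fun v : Fin (L + R) => (v:ℕ) < L),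
      rate lam G S v * vAge lam_e lam G (insert v S) = (lam / R) * V' := by
    intro v hv
    obtain ⟨hv1, hvL, hvS⟩ := hmemL v hv
    have hrate : rate lam G S v = lam / R := by
      unfold rate
      rw [hG, hSdef, biGraph_degree_left v hvL, inter_left hR1 hkL v hvL]
      rw [if_neg (by omega)]
      push_cast
      ring
    have hval : vAge lam_e lam G (insert v S) = V' := by
      rw [hV', hS'def, ← insert_left_eq hR1 hkL v hv1 hvL]
      exact (vAge_image _ (biGraph_swap_auto v ⟨k, by omega⟩ hvL (by simpa using hkL)) _).symm
    rw [hrate, hval]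
  have hsumL : ∑ v ∈ Sᶜ.filter (fun v : Fin (L + R) => (v:ℕ) < L),
      rate lam G S v * vAge lam_e lam G (insert v S) = ((L - k : ℕ) : ℝ) * ((lam / R) * V') := by
    rw [Finset.sum_congr rfl hleft, Finset.sum_const, hSdef, card_leftOut, nsmul_eq_mul]
  have hrateR : ∀ v ∈ Sᶜ.filter (fun v : Fin (L + R) => ¬ (v:ℕ) < L),
      rate lam G S v = lam * k / L := by
    intro v hv
    rw [Finset.mem_filter] at hv
    obtain ⟨hvc, hvL⟩ := hv
    unfold rate
    rw [hG, hSdef, biGraph_degree_right v hvL, inter_right hkL v hvL]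
    rw [if_neg (by omega)]
  have hsumR : ∑ v ∈ Sᶜ.filter (fun v : Fin (L + R) => ¬ (v:ℕ) < L),
      rate lam G S v * vAge lam_e lam G (insert v S)
      ≤ ((R - 1 : ℕ) : ℝ) * ((lam * k / L) * V) := by
    calc ∑ v ∈ Sᶜ.filter (fun v : Fin (L + R) => ¬ (v:ℕ) < L),
        rate lam G S v * vAge lam_e lam G (insert v S)
        ≤ ∑ v ∈ Sᶜ.filter (fun v : Fin (L + R) => ¬ (v:ℕ) < L), (lam * k / L) * V := by
          apply Finset.sum_le_sum
          intro v hv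
          rw [hrateR v hv]
          have hvS : v ∉ S := Finset.mem_compl.mp (Finset.mem_filter.mp hv).1
          have hins : vAge lam_e lam G (insert v S) ≤ V :=
            vAge_insert_le hlam_e hlam S hSne v hvS
          have h0 : (0:ℝ) ≤ lam * k / L := by positivity
          exact mul_le_mul_of_nonneg_left hins h0
      _ = ((R - 1 : ℕ) : ℝ) * ((lam * k / L) * V) := by
          rw [Finset.sum_const, hSdef, card_rightOut hkL, nsmul_eq_mul]
  have hDsumL : ∑ v ∈ Sᶜ.filter (fun v : Fin (L + R) => (v:ℕ) < L),
      rate lam G S v = ((L - k : ℕ) : ℝ) * (lam / R) := by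
    have : ∀ v ∈ Sᶜ.filter (fun v : Fin (L + R) => (v:ℕ) < L), rate lam G S v = lam / R := by
      intro v hv
      obtain ⟨hv1, hvL, hvS⟩ := hmemL v hv
      unfold rate
      rw [hG, hSdef, biGraph_degree_left v hvL, inter_left hR1 hkL v hvL]
      rw [if_neg (by omega)]
      push_cast
      ring
    rw [Finset.sum_congr rfl this, Finset.sum_const, hSdef, card_leftOut, nsmul_eq_mul]
  have hDsumR : ∑ v ∈ Sᶜ.filter (fun v : Fin (L + R) => ¬ (v:ℕ) < L),
      rate lam G S v = ((R - 1 : ℕ) : ℝ) * (lam * k / L) := by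
    rw [Finset.sum_congr rfl hrateR, Finset.sum_const, hSdef, card_rightOut hkL, nsmul_eq_mul]
  -- the recursion at S, as an equality
  have hden := den_pos (G := G) hlam hSne
  have hrec : V * (lam * (S.card : ℝ) / ((L + R : ℕ) : ℝ) + ∑ i ∈ Sᶜ, rate lam G S i)
      = lam_e + ∑ i ∈ Sᶜ, rate lam G S i * vAge lam_e lam G (insert i S) := by
    rw [hV, vAge_def S, div_mul_cancel₀ _ hden.ne']
  rw [← Finset.sum_filter_add_sum_filter_not Sᶜ (fun v : Fin (L + R) => (v:ℕ) < L)
      (fun i => rate lam G S i * vAge lam_e lam G (insert i S)),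
    ← Finset.sum_filter_add_sum_filter_not Sᶜ (fun v : Fin (L + R) => (v:ℕ) < L)
      (fun i => rate lam G S i), hsumL, hDsumL, hDsumR] at hrec
  have hcard : (S.card : ℝ) = (k : ℝ) + 1 := by
    rw [hSdef, card_canon1 hR1 hkL]; push_cast; ring
  rw [hcard] at hrec
  -- abbreviations
  set a : ℝ := ((L - k : ℕ) : ℝ) * (lam / R) with ha
  set b : ℝ := ((R - 1 : ℕ) : ℝ) * (lam * k / L) with hb
  set w : ℝ := lam * ((k:ℝ) + 1) / ((L + R : ℕ) : ℝ) with hw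
  have hw0 : (0:ℝ) ≤ w := by
    rw [hw]; positivity
  have hb0 : (0:ℝ) ≤ b := by
    rw [hb]; positivity
  have ha0 : (0:ℝ) < a := by
    rw [ha]
    have h1 : (0:ℝ) < ((L - k : ℕ) : ℝ) := by
      have : 1 ≤ L - k := by omega
      exact_mod_cast Nat.lt_of_lt_of_le Nat.zero_lt_one this
    positivity
  -- key inequality
  have key : V * a ≤ lam_e + a * V' := by
    nlinarith [hrec, hsumR, mul_nonneg hV0 hw0, mul_nonneg hV0 hb0]
  have hfinal : V ≤ lam_e / a + V' := by
    have h1 : V ≤ (lam_e + a * V') / a := (le_div_iff₀ ha0).mpr key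
    rwa [add_div, mul_div_cancel_left₀ _ ha0.ne'] at h1
  -- conclude
  have hcast : ((L - k : ℕ) : ℝ) = (L : ℝ) - (k : ℝ) := by
    have : k ≤ L := by omega
    push_cast [this]
    ring
  have hLk : (0:ℝ) < (L : ℝ) - (k : ℝ) := by
    have : (k:ℝ) < (L:ℝ) := by exact_mod_cast Nat.lt_of_succ_le hkL
    linarith
  rw [uIJ, uIJ, ← hG, ← hSdef, ← hS'def, ← hV, ← hV']
  calc (lam / lam_e) * V ≤ (lam / lam_e) * (lam_e / a + V') := by
        apply mul_le_mul_of_nonneg_left hfinal (by positivity)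
    _ = (R : ℝ) / ((L : ℝ) - (k : ℝ)) + (lam / lam_e) * V' := by
        rw [ha, hcast]
        have hR0 : (0:ℝ) < (R:ℝ) := by exact_mod_cast hR
        field_simp
end
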